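/- arXiv:2310.15613 — 2 statements merged into one kernel-verified Lean document; each statement's English description precedes it below -/
import Mathlib

section
/- Let μ, σ, ν, θ, p be real numbers with μ > 2, 0 ≤ σ < μ − 1, ν ≥ 3, 0 < θ ≤ ν, and p > 2. Then the inequality 2p/(θ(p−2)) − ν/θ > μ/(μ−σ−1) holds if and only if p < (θμ + (ν+2)(μ−σ−1))/(θμ + (ν−2)(μ−σ−1)) + 1. Moreover, (θμ + (ν+2)(μ−σ−1))/(θμ + (ν−2)(μ−σ−1)) + 1 < 2ν/(ν−2). -/
/-! With `a = μ - σ - 1 > 0` and `c = θ μ > 0`, clearing the positive denominators turns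
`2p/(θ(p-2)) - ν/θ > μ/a` into the linear condition `p (c + (ν-2) a) < 2 (c + ν a)`, and the
bound on the right equals `2 (c + ν a) / (c + (ν-2) a)`. Cross-multiplying, this falls short of
`2ν/(ν-2)` by a positive multiple of `c`. -/

lemma add_sub_two_mul_pos {c a ν : ℝ} (hc : 0 < c) (ha : 0 < a) (hν : 2 < ν) :
    0 < c + (ν - 2) * a := by
  have := mul_pos (sub_pos.2 hν) ha
  linarith

lemma div_add_one_eq_two_mul_div {c a ν : ℝ} (hD : c + (ν - 2) * a ≠ 0) :
    (c + (ν + 2) * a) / (c + (ν - 2) * a) + 1 = 2 * (c + ν * a) / (c + (ν - 2) * a) := by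
  rw [div_add_one hD]
  ring

lemma two_mul_div_sub_div_gt_iff_mul_lt {θ μ ν a p : ℝ} (hθ : 0 < θ) (ha : 0 < a) (hp : 2 < p) :
    2 * p / (θ * (p - 2)) - ν / θ > μ / a ↔ p * (θ * μ + (ν - 2) * a) < 2 * (θ * μ + ν * a) := by
  have hden : 0 < θ * (p - 2) := mul_pos hθ (sub_pos.2 hp)
  have hsub : 2 * p / (θ * (p - 2)) - ν / θ = (2 * p - ν * (p - 2)) / (θ * (p - 2)) := by
    rw [div_sub_div _ _ hden.ne' hθ.ne', div_eq_div_iff (by positivity) hden.ne']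
    ring
  rw [gt_iff_lt, hsub, div_lt_div_iff₀ ha hden, ← sub_pos, ← sub_pos (b := p * _)]
  ring_nf

lemma two_mul_div_lt_two_mul_div_sub_two {c a ν : ℝ} (hc : 0 < c) (ha : 0 < a) (hν : 2 < ν) :
    2 * (c + ν * a) / (c + (ν - 2) * a) < 2 * ν / (ν - 2) := by
  rw [div_lt_div_iff₀ (add_sub_two_mul_pos hc ha hν) (sub_pos.2 hν), ← sub_pos]
  ring_nf
  positivity

theorem stmt_2_general (μ σ ν θ p : ℝ) (hμ : 2 < μ) (hσ : σ < μ - 1)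
    (hν : 3 ≤ ν) (hθ0 : 0 < θ) (hp : 2 < p) :
    (2 * p / (θ * (p - 2)) - ν / θ > μ / (μ - σ - 1) ↔
      p < (θ * μ + (ν + 2) * (μ - σ - 1)) / (θ * μ + (ν - 2) * (μ - σ - 1)) + 1) ∧
    (θ * μ + (ν + 2) * (μ - σ - 1)) / (θ * μ + (ν - 2) * (μ - σ - 1)) + 1
      < 2 * ν / (ν - 2) := by
  have ha : 0 < μ - σ - 1 := by linarith
  have hc : 0 < θ * μ := mul_pos hθ0 (by linarith)
  have hν2 : 2 < ν := by linarith
  have hD := add_sub_two_mul_pos hc ha hν2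
  rw [div_add_one_eq_two_mul_div hD.ne', two_mul_div_sub_div_gt_iff_mul_lt hθ0 ha hp,
    lt_div_iff₀ hD]
  exact ⟨Iff.rfl, two_mul_div_lt_two_mul_div_sub_two hc ha hν2⟩

theorem stmt_2 (μ σ ν θ p : ℝ) (hμ : 2 < μ) (hσ0 : 0 ≤ σ) (hσ : σ < μ - 1)
    (hν : 3 ≤ ν) (hθ0 : 0 < θ) (hθν : θ ≤ ν) (hp : 2 < p) :
    (2 * p / (θ * (p - 2)) - ν / θ > μ / (μ - σ - 1) ↔
      p < (θ * μ + (ν + 2) * (μ - σ - 1)) / (θ * μ + (ν - 2) * (μ - σ - 1)) + 1) ∧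
    (θ * μ + (ν + 2) * (μ - σ - 1)) / (θ * μ + (ν - 2) * (μ - σ - 1)) + 1
      < 2 * ν / (ν - 2) :=
  stmt_2_general μ σ ν θ p hμ hσ hν hθ0 hp
end

section
/- Let (Y, μ) be a finite measure space, let q > 1, let G be a normed vector space, and let ι : G → L^q(Y, μ) be a bounded linear map. Assume that every bounded sequence (u_k) in G has a subsequence (u_{k_j}) such that the functions ι(u_{k_j}) converge μ-almost everywhere on Y. Then for every s with 1 ≤ s < q, the map from G to L^s(Y, μ) obtained by composing ι with the natural inclusion L^q(Y,μ) ⊆ L^s(Y,μ) is a compact operator, i.e. it maps bounded subsets of G to relatively compact subsets of L^s(Y, μ). -/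
/-!
A family bounded in `L^q` is uniformly integrable in `L^s` for `s < q`, since by Hölder
`‖1_t f‖_s ≤ ‖f‖_q μ(t)^(1/s - 1/q)`. Vitali's convergence theorem therefore upgrades the
a.e. convergent subsequences given by the hypothesis to `L^s`-convergent ones, so the image of
a bounded set is totally bounded in the complete space `L^s`.
-/

open MeasureTheory Filter Topology
open scoped ENNReal NNReal

theorem totallyBounded_of_forall_cauchySeq_subseq {X : Type*} [UniformSpace X] {s : Set X}
    (h : ∀ u : ℕ → X, (∀ n, u n ∈ s) →
      ∃ φ : ℕ → ℕ, StrictMono φ ∧ CauchySeq (u ∘ φ)) :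
    TotallyBounded s := by
  intro V hV
  by_contra! hcover
  have hnext : ∀ t : Set X, t.Finite → ∃ c, c ∈ s ∧ ∀ y ∈ t, (c, y) ∉ V := by
    intro t ht
    obtain ⟨c, hcs, hc⟩ := Set.not_subset.1 (hcover t ht)
    exact ⟨c, hcs, fun y hy hcy => hc (Set.mem_biUnion hy hcy)⟩
  obtain ⟨u, hu⟩ := Set.seq_of_forall_finite_exists hnext
  obtain ⟨φ, hφ, hcauchy⟩ := h u fun n => (hu n).1
  obtain ⟨N, hN⟩ : ∃ N, ∀ a b, a ≥ N → b ≥ N → (u (φ a), u (φ b)) ∈ V :=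
    hcauchy.mem_entourage hV
  exact (hu (φ (N + 1))).2 (u (φ N)) (Set.mem_image_of_mem u (hφ (Nat.lt_add_one N)))
    (hN (N + 1) N N.le_succ le_rfl)

namespace ENNReal

theorem one_div_toReal_sub_one_div_toReal_pos {r p : ℝ≥0∞} (hr : r ≠ 0) (hrp : r < p) :
    0 < 1 / r.toReal - 1 / p.toReal := by
  have hr_pos : 0 < r.toReal := ENNReal.toReal_pos hr hrp.ne_top
  rcases eq_or_ne p ∞ with rfl | hp
  · simpa using hr_pos
  · exact sub_pos.2 (one_div_lt_one_div_of_lt hr_pos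
      ((ENNReal.toReal_lt_toReal hrp.ne_top hp).2 hrp))

end ENNReal

namespace MeasureTheory

variable {α β ι : Type*} [MeasurableSpace α] {μ : Measure α} [NormedAddCommGroup β]
  {p r : ℝ≥0∞}

theorem eLpNorm_indicator_le_mul_measure_rpow {g : α → β} (hrp : r ≤ p)
    (hg : AEStronglyMeasurable g μ) {t : Set α} (ht : MeasurableSet t) :
    eLpNorm (t.indicator g) r μ ≤ eLpNorm g p μ * μ t ^ (1 / r.toReal - 1 / p.toReal) := by
  rw [eLpNorm_indicator_eq_eLpNorm_restrict ht]
  refine (eLpNorm_le_eLpNorm_mul_rpow_measure_univ hrp hg.restrict).trans ?_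
  rw [Measure.restrict_apply_univ]
  gcongr
  exact Measure.restrict_le_self

theorem unifIntegrable_of_eLpNorm_le {f : ι → α → β} (hr : r ≠ 0) (hrp : r < p)
    (hf : ∀ i, AEStronglyMeasurable (f i) μ) {C : ℝ≥0}
    (hC : ∀ i, eLpNorm (f i) p μ ≤ C) :
    UnifIntegrable f r μ := by
  set e := 1 / r.toReal - 1 / p.toReal
  have he : 0 < e := ENNReal.one_div_toReal_sub_one_div_toReal_pos hr hrp
  intro ε hε
  have hlim :
      Tendsto (fun δ : ℝ => (C : ℝ≥0∞) * ENNReal.ofReal δ ^ e) (𝓝[>] 0) (𝓝 0) := by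
    have hcont : Continuous fun δ : ℝ => (C : ℝ≥0∞) * ENNReal.ofReal δ ^ e :=
      (ENNReal.continuous_const_mul ENNReal.coe_ne_top).comp
        (ENNReal.continuous_rpow_const.comp ENNReal.continuous_ofReal)
    simpa [ENNReal.zero_rpow_of_pos he] using (hcont.tendsto 0).mono_left nhdsWithin_le_nhds
  obtain ⟨δ, hδε, hδ⟩ :=
    ((hlim.eventually (ge_mem_nhds (ENNReal.ofReal_pos.2 hε))).and self_mem_nhdsWithin).exists
  refine ⟨δ, hδ, fun i t ht hμt => ?_⟩
  calc eLpNorm (t.indicator (f i)) r μ ≤ eLpNorm (f i) p μ * μ t ^ e :=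
        eLpNorm_indicator_le_mul_measure_rpow hrp.le (hf i) ht
    _ ≤ C * ENNReal.ofReal δ ^ e := by gcongr; exact hC i
    _ ≤ ENNReal.ofReal ε := hδε

theorem uniformIntegrable_of_eLpNorm_le [IsFiniteMeasure μ] {f : ι → α → β} (hr : r ≠ 0)
    (hrp : r < p) (hf : ∀ i, AEStronglyMeasurable (f i) μ) {C : ℝ≥0}
    (hC : ∀ i, eLpNorm (f i) p μ ≤ C) :
    UniformIntegrable f r μ := by
  set e := 1 / r.toReal - 1 / p.toReal
  have he : 0 < e := ENNReal.one_div_toReal_sub_one_div_toReal_pos hr hrp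
  refine ⟨hf, unifIntegrable_of_eLpNorm_le hr hrp hf hC, (C * μ Set.univ ^ e).toNNReal,
    fun i => ?_⟩
  rw [ENNReal.coe_toNNReal (by finiteness)]
  calc eLpNorm (f i) r μ ≤ eLpNorm (f i) p μ * μ Set.univ ^ e :=
        eLpNorm_le_eLpNorm_mul_rpow_measure_univ hrp.le (hf i)
    _ ≤ C * μ Set.univ ^ e := by gcongr; exact hC i

theorem tendsto_eLpNorm_sub_of_tendsto_ae_of_eLpNorm_le [IsFiniteMeasure μ]
    (hr : 1 ≤ r) (hrp : r < p) {f : ℕ → α → β} {g : α → β} (hf : ∀ n, AEStronglyMeasurable (f n) μ)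
    {C : ℝ≥0} (hC : ∀ n, eLpNorm (f n) p μ ≤ C)
    (hfg : ∀ᵐ x ∂μ, Tendsto (fun n => f n x) atTop (𝓝 (g x))) :
    MemLp g r μ ∧ Tendsto (fun n => eLpNorm (f n - g) r μ) atTop (𝓝 0) := by
  have hUI := uniformIntegrable_of_eLpNorm_le (by positivity) hrp hf hC
  have hg := hUI.memLp_of_ae_tendsto hfg
  exact ⟨hg, tendsto_Lp_finite_of_tendsto_ae hr hrp.ne_top hf hg hUI.unifIntegrable hfg⟩

end MeasureTheory

theorem stmt_16_general
    {Y : Type*} [MeasurableSpace Y] (μ : Measure Y) [IsFiniteMeasure μ]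
    (q : ℝ) [Fact (1 ≤ ENNReal.ofReal q)]
    {G : Type*} [NormedAddCommGroup G] [NormedSpace ℝ G]
    (ι : G →L[ℝ] Lp ℝ (ENNReal.ofReal q) μ)
    (hae : ∀ u : ℕ → G, Bornology.IsBounded (Set.range u) →
      ∃ φ : ℕ → ℕ, StrictMono φ ∧
        ∀ᵐ y ∂μ, ∃ l : ℝ,
          Tendsto (fun j => (ι (u (φ j)) : Y → ℝ) y) atTop (nhds l))
    (s : ℝ) (hs1 : 1 ≤ s) (hsq : s < q) [Fact (1 ≤ ENNReal.ofReal s)] :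
    ∃ J : G → Lp ℝ (ENNReal.ofReal s) μ,
      (∀ u : G, (J u : Y → ℝ) =ᵐ[μ] (ι u : Y → ℝ)) ∧
      ∀ S : Set G, Bornology.IsBounded S → IsCompact (closure (J '' S)) := by
  have hr : 1 ≤ ENNReal.ofReal s := ENNReal.one_le_ofReal.2 hs1
  have hrp : ENNReal.ofReal s < ENNReal.ofReal q :=
    (ENNReal.ofReal_lt_ofReal_iff (by linarith)).2 hsq
  have hmem (u : G) : MemLp (ι u) (ENNReal.ofReal s) μ :=
    (Lp.memLp (ι u)).mono_exponent hrp.le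
  refine ⟨fun u => (hmem u).toLp _, fun u => (hmem u).coeFn_toLp, fun S hS => ?_⟩
  obtain ⟨M, hM⟩ := isBounded_iff_forall_norm_le.1 (ι.lipschitz.isBounded_image hS)
  have hC (u : G) (hu : u ∈ S) : eLpNorm (ι u) (ENNReal.ofReal q) μ ≤ M.toNNReal :=
    calc eLpNorm (ι u) (ENNReal.ofReal q) μ = ENNReal.ofReal ‖ι u‖ := by
          rw [← Lp.enorm_def, ofReal_norm]
      _ ≤ ENNReal.ofReal M := ENNReal.ofReal_le_ofReal (hM _ ⟨u, hu, rfl⟩)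
  refine TotallyBounded.isCompact_of_isClosed ?_ isClosed_closure
  refine totallyBounded_closure.2 (totallyBounded_of_forall_cauchySeq_subseq fun v hv => ?_)
  choose w hwS hwv using hv
  obtain ⟨φ, hφ, hconv⟩ := hae w (hS.subset (Set.range_subset_iff.2 hwS))
  obtain ⟨g, -, hg⟩ := exists_stronglyMeasurable_limit_of_tendsto_ae
    (fun j => Lp.aestronglyMeasurable (ι (w (φ j)))) hconv
  obtain ⟨hgr, hlim⟩ := tendsto_eLpNorm_sub_of_tendsto_ae_of_eLpNorm_le hr hrp
    (fun j => Lp.aestronglyMeasurable _) (fun j => hC _ (hwS (φ j))) hg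
  refine ⟨φ, hφ, ?_⟩
  have hconvLp :=
    (Lp.tendsto_Lp_iff_tendsto_eLpNorm'' _ (fun j => hmem (w (φ j))) g hgr).2 hlim
  simpa [Function.comp_def, hwv] using hconvLp.cauchySeq

theorem stmt_16
    {Y : Type*} [MeasurableSpace Y] (μ : Measure Y) [IsFiniteMeasure μ]
    (q : ℝ) (hq : 1 < q) [Fact (1 ≤ ENNReal.ofReal q)]
    {G : Type*} [NormedAddCommGroup G] [NormedSpace ℝ G]
    (ι : G →L[ℝ] Lp ℝ (ENNReal.ofReal q) μ)
    (hae : ∀ u : ℕ → G, Bornology.IsBounded (Set.range u) →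
      ∃ φ : ℕ → ℕ, StrictMono φ ∧
        ∀ᵐ y ∂μ, ∃ l : ℝ,
          Tendsto (fun j => (ι (u (φ j)) : Y → ℝ) y) atTop (nhds l))
    (s : ℝ) (hs1 : 1 ≤ s) (hsq : s < q) [Fact (1 ≤ ENNReal.ofReal s)] :
    ∃ J : G → Lp ℝ (ENNReal.ofReal s) μ,
      (∀ u : G, (J u : Y → ℝ) =ᵐ[μ] (ι u : Y → ℝ)) ∧
      ∀ S : Set G, Bornology.IsBounded S → IsCompact (closure (J '' S)) :=
  stmt_16_general μ q ι hae s hs1 hsq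
end
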